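/- Residue theorem on ℙ¹: for every rational function h ∈ ℂ(t), the family (Res_a(h))_{a∈ℂ} of residues at the points of ℂ has finite support, and the total residue vanishes: (∑_{a∈ℂ} Res_a(h)) + Res_∞(h) = 0. -/

import Mathlib

open scoped LaurentSeries

/-- The residue of a rational function `h ∈ ℂ(t)` at a point `a ∈ ℂ`: the coefficient of
`t⁻¹` in the formal Laurent series expansion at `0` of the translated function
`t ↦ h(t+a)` (the latter being `RatFunc.laurent a h`). -/
noncomputable def resAt (a : ℂ) (h : RatFunc ℂ) : ℂ :=
  ((RatFunc.laurent a h : RatFunc ℂ) : LaurentSeries ℂ).coeff (-1)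

/-- The substitution `t ↦ 1/t` applied to a rational function: `h(1/t) = p(1/t)/q(1/t)`
where `h = p/q` in lowest terms. -/
noncomputable def invSubst (h : RatFunc ℂ) : RatFunc ℂ :=
  Polynomial.aeval (RatFunc.X : RatFunc ℂ)⁻¹ h.num /
    Polynomial.aeval (RatFunc.X : RatFunc ℂ)⁻¹ h.denom

/-- The residue of a rational function at infinity: `Res_∞(h) := −Res_0(t⁻²·h(1/t))`. -/
noncomputable def resInf (h : RatFunc ℂ) : ℂ :=
  -resAt 0 ((RatFunc.X : RatFunc ℂ) ^ (-2 : ℤ) * invSubst h)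

/-- A rational function is regular at `a ∈ ℂ` if it can be written with denominator not
vanishing at `a`. -/
def RegularAt (f : RatFunc ℂ) (a : ℂ) : Prop :=
  ∃ p q : Polynomial ℂ, q.eval a ≠ 0 ∧
    f = algebraMap (Polynomial ℂ) (RatFunc ℂ) p / algebraMap (Polynomial ℂ) (RatFunc ℂ) q

/-- A rational function is regular at infinity if it can be written with numerator degree
at most denominator degree. -/
def RegularAtInfinity (f : RatFunc ℂ) : Prop :=
  ∃ p q : Polynomial ℂ, q ≠ 0 ∧ p.degree ≤ q.degree ∧
    f = algebraMap (Polynomial ℂ) (RatFunc ℂ) p / algebraMap (Polynomial ℂ) (RatFunc ℂ) q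

/-- The derivative of a rational function, via the quotient rule. -/
noncomputable def ratDeriv (f : RatFunc ℂ) : RatFunc ℂ :=
  (algebraMap (Polynomial ℂ) (RatFunc ℂ) (Polynomial.derivative f.num) *
      algebraMap (Polynomial ℂ) (RatFunc ℂ) f.denom -
    algebraMap (Polynomial ℂ) (RatFunc ℂ) f.num *
      algebraMap (Polynomial ℂ) (RatFunc ℂ) (Polynomial.derivative f.denom)) /
    algebraMap (Polynomial ℂ) (RatFunc ℂ) (f.denom ^ 2)

/-!
Over an algebraically closed field every rational function is a sum of a polynomial and of
partial fractions `c / (t - a)^k` with `k ≥ 1`, and residues are additive. A rational function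
with a denominator not vanishing at `a` has a power series expansion there, hence no residue at
`a`; so a polynomial has no residue anywhere, and `c / (t - a)^k` can only have residues at `a`
and at `∞`. For `k ≥ 2` both vanish; for `k = 1` they are `c` and `-c`, the latter because
`t⁻² · c / (t⁻¹ - a) = c / t + c a / (1 - a t)`.
-/

open Polynomial

namespace RatFunc

variable {K : Type*} [Field K]

theorem coeff_coe_div_eq_zero_of_neg {p q : K[X]} (hq : q.coeff 0 ≠ 0) {n : ℤ} (hn : n < 0) :
    ((algebraMap K[X] (RatFunc K) p / algebraMap K[X] (RatFunc K) q : RatFunc K) :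
      K⸨X⸩).coeff n = 0 := by
  have hq' : PowerSeries.constantCoeff (q : PowerSeries K) ≠ 0 := by simpa using hq
  have hinv : (HahnSeries.ofPowerSeries ℤ K q)⁻¹ =
      HahnSeries.ofPowerSeries ℤ K (q : PowerSeries K)⁻¹ :=
    inv_eq_of_mul_eq_one_right (by rw [← map_mul, PowerSeries.mul_inv_cancel _ hq', map_one])
  rw [map_div₀, ← coePolynomial_eq_algebraMap, ← coePolynomial_eq_algebraMap, ← coe_coe,
    ← coe_coe, div_eq_mul_inv, hinv, ← map_mul, PowerSeries.coeff_coe, if_pos hn]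

theorem coe_C_mul_X_zpow (c : K) (n : ℤ) :
    ((C c * X ^ n : RatFunc K) : K⸨X⸩) = HahnSeries.single n c := by
  rw [map_mul, map_zpow₀, coe_X, ← single_zpow, ← algebraMap_C, ← coePolynomial_eq_algebraMap,
    ← coe_coe, Polynomial.coe_C, PowerSeries.coe_C, HahnSeries.C_apply,
    HahnSeries.single_mul_single, zero_add, mul_one]

theorem transcendental_inv_X : Transcendental K (X⁻¹ : RatFunc K) :=
  fun h => transcendental_X (IsAlgebraic.inv_iff.mp h)

noncomputable def invXAlgHom : RatFunc K →ₐ[K] RatFunc K :=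
  liftAlgHom (aeval X⁻¹) (nonZeroDivisors_le_comap_nonZeroDivisors_of_injective _
    (transcendental_iff_injective.mp transcendental_inv_X))

theorem invXAlgHom_X : invXAlgHom (X : RatFunc K) = X⁻¹ := by
  rw [← algebraMap_X, invXAlgHom, ← div_one (algebraMap _ _ _), ← map_one (algebraMap K[X] _),
    liftAlgHom_apply_div]
  simp

theorem invXAlgHom_C (c : K) : invXAlgHom (C c) = C c := by
  rw [← algebraMap_eq_C]
  exact invXAlgHom.commutes c

theorem exists_div_eq_C_div_X_sub_C_pow_add_div (p q : K[X]) {a : K} (hq : q.eval a ≠ 0)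
    (k : ℕ) : ∃ (c : K) (r : K[X]),
      algebraMap K[X] (RatFunc K) p /
          algebraMap K[X] (RatFunc K) ((Polynomial.X - Polynomial.C a) ^ (k + 1) * q) =
        C c / (X - C a) ^ (k + 1) +
          algebraMap K[X] (RatFunc K) r /
            algebraMap K[X] (RatFunc K) ((Polynomial.X - Polynomial.C a) ^ k * q) := by
  set c := p.eval a / q.eval a
  obtain ⟨r, hr⟩ : Polynomial.X - Polynomial.C a ∣ p - Polynomial.C c * q := by
    rw [dvd_iff_isRoot, IsRoot, Polynomial.eval_sub, Polynomial.eval_mul, Polynomial.eval_C,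
      div_mul_cancel₀ _ hq, sub_self]
  refine ⟨c, r, ?_⟩
  have hX : (X - C a : RatFunc K) ≠ 0 := by
    rw [← algebraMap_X, ← algebraMap_C, ← map_sub]
    exact algebraMap_ne_zero (X_sub_C_ne_zero a)
  have hq' : algebraMap K[X] (RatFunc K) q ≠ 0 := algebraMap_ne_zero fun h => hq (by simp [h])
  rw [sub_eq_iff_eq_add'.mp hr]
  simp only [map_add, map_mul, map_pow, map_sub, algebraMap_C, algebraMap_X]
  field_simp
  ring

theorem closure_range_algebraMap_union_C_div_X_sub_C_pow_eq_top [IsAlgClosed K] :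
    AddSubmonoid.closure (Set.range (algebraMap K[X] (RatFunc K)) ∪
      {f | ∃ (c a : K) (k : ℕ), 0 < k ∧ f = C c / (X - C a) ^ k}) = ⊤ := by
  set S := AddSubmonoid.closure (Set.range (algebraMap K[X] (RatFunc K)) ∪
      {f | ∃ (c a : K) (k : ℕ), 0 < k ∧ f = C c / (X - C a) ^ k})
  suffices h : ∀ n (p q : K[X]), q ≠ 0 → q.natDegree = n →
      algebraMap K[X] (RatFunc K) p / algebraMap K[X] (RatFunc K) q ∈ S from
    (AddSubmonoid.eq_top_iff' S).mpr fun f => num_div_denom f ▸ h _ _ _ f.denom_ne_zero rfl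
  intro n
  induction n using Nat.strong_induction_on with
  | _ n ih =>
    intro p q hq hn
    by_cases hdeg : q.natDegree = 0
    · rw [eq_C_of_natDegree_eq_zero hdeg]
      refine AddSubmonoid.subset_closure (Or.inl ⟨Polynomial.C (q.coeff 0)⁻¹ * p, ?_⟩)
      rw [map_mul, algebraMap_C, algebraMap_C, map_inv₀, div_eq_inv_mul]
    · obtain ⟨a, ha⟩ := IsAlgClosed.exists_root q
        (natDegree_pos_iff_degree_pos.mp (Nat.pos_of_ne_zero hdeg)).ne'
      obtain ⟨q₁, hfact, hq₁⟩ := exists_eq_pow_rootMultiplicity_mul_and_not_dvd q hq a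
      obtain ⟨k, hk⟩ : ∃ k, q.rootMultiplicity a = k + 1 :=
        Nat.exists_eq_succ_of_ne_zero ((rootMultiplicity_pos hq).mpr ha).ne'
      rw [hk] at hfact
      rw [dvd_iff_isRoot] at hq₁
      obtain ⟨c, r, hsplit⟩ := exists_div_eq_C_div_X_sub_C_pow_add_div p q₁ hq₁ k
      have hq₁0 : q₁ ≠ 0 := fun h => hq₁ (by simp [h])
      have hne : (Polynomial.X - Polynomial.C a) ^ k * q₁ ≠ 0 :=
        mul_ne_zero (pow_ne_zero _ (X_sub_C_ne_zero a)) hq₁0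
      have hlt : ((Polynomial.X - Polynomial.C a) ^ k * q₁).natDegree < n := by
        rw [← hn, hfact, natDegree_mul (pow_ne_zero _ (X_sub_C_ne_zero a)) hq₁0,
          natDegree_mul (pow_ne_zero _ (X_sub_C_ne_zero a)) hq₁0]
        simp
      rw [hfact, hsplit]
      exact add_mem (AddSubmonoid.subset_closure (Or.inr ⟨c, a, k + 1, k.succ_pos, rfl⟩))
        (ih _ hlt r _ hne rfl)

end RatFunc

theorem invSubst_eq_invXAlgHom (h : RatFunc ℂ) : invSubst h = RatFunc.invXAlgHom h :=
  (RatFunc.liftAlgHom_apply _ _ h).symm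

theorem resAt_add (a : ℂ) (f g : RatFunc ℂ) : resAt a (f + g) = resAt a f + resAt a g := by
  simp only [resAt, map_add, HahnSeries.coeff_add]

theorem resAt_eq_resAt_zero_laurent (a : ℂ) (f : RatFunc ℂ) :
    resAt a f = resAt 0 (RatFunc.laurent a f) := by
  rw [resAt, resAt, RatFunc.laurent_at_zero]

theorem resAt_eq_zero_of_regularAt {f : RatFunc ℂ} {a : ℂ} (hf : RegularAt f a) :
    resAt a f = 0 := by
  obtain ⟨p, q, hq, rfl⟩ := hf
  rw [resAt, RatFunc.laurent_div]
  exact RatFunc.coeff_coe_div_eq_zero_of_neg (by rwa [Polynomial.taylor_coeff_zero]) (by norm_num)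

theorem resAt_zero_C_mul_X_zpow (c : ℂ) (n : ℤ) :
    resAt 0 (RatFunc.C c * RatFunc.X ^ n) = if n = -1 then c else 0 := by
  rw [resAt, RatFunc.laurent_at_zero, RatFunc.coe_C_mul_X_zpow, HahnSeries.coeff_single]
  simp only [eq_comm]

theorem resAt_algebraMap (a : ℂ) (p : ℂ[X]) :
    resAt a (algebraMap ℂ[X] (RatFunc ℂ) p) = 0 :=
  resAt_eq_zero_of_regularAt ⟨p, 1, by simp, by simp⟩

theorem resAt_C_div_X_sub_C_pow_of_ne {a b : ℂ} (hba : b ≠ a) (c : ℂ) (k : ℕ) :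
    resAt b (RatFunc.C c / (RatFunc.X - RatFunc.C a) ^ k) = 0 :=
  resAt_eq_zero_of_regularAt ⟨Polynomial.C c, (Polynomial.X - Polynomial.C a) ^ k,
    by simp [sub_ne_zero.mpr hba], by simp⟩

theorem resAt_C_div_X_sub_C_pow_self (c a : ℂ) (k : ℕ) :
    resAt a (RatFunc.C c / (RatFunc.X - RatFunc.C a) ^ k) = if k = 1 then c else 0 := by
  have hlaurent : RatFunc.laurent a (RatFunc.C c / (RatFunc.X - RatFunc.C a) ^ k)
      = RatFunc.C c * RatFunc.X ^ (-(k : ℤ)) := by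
    simp [RatFunc.laurent_X, RatFunc.laurent_C, zpow_neg, div_eq_mul_inv]
  rw [resAt_eq_resAt_zero_laurent, hlaurent, resAt_zero_C_mul_X_zpow]
  simp only [neg_inj, Nat.cast_eq_one]

theorem resInf_add (f g : RatFunc ℂ) : resInf (f + g) = resInf f + resInf g := by
  simp only [resInf, invSubst_eq_invXAlgHom, map_add, mul_add, resAt_add, neg_add]

theorem resInf_algebraMap (p : ℂ[X]) :
    resInf (algebraMap ℂ[X] (RatFunc ℂ) p) = 0 := by
  induction p using Polynomial.induction_on' with
  | add f g hf hg => rw [map_add, resInf_add, hf, hg, add_zero]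
  | monomial n c =>
    have h : (RatFunc.X : RatFunc ℂ) ^ (-2 : ℤ) *
        invSubst (algebraMap ℂ[X] (RatFunc ℂ) (Polynomial.monomial n c))
        = RatFunc.C c * RatFunc.X ^ (-(n + 2 : ℤ)) := by
      rw [invSubst_eq_invXAlgHom, RatFunc.algebraMap_monomial, map_mul, map_pow,
        RatFunc.invXAlgHom_X, RatFunc.invXAlgHom_C, ← zpow_natCast, ← zpow_neg_one,
        ← zpow_mul, mul_left_comm, ← zpow_add₀ RatFunc.X_ne_zero]
      ring_nf
    rw [resInf, h, resAt_zero_C_mul_X_zpow, if_neg (by omega), neg_zero]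

theorem invSubst_C_div_X_sub_C_pow (c a : ℂ) (k : ℕ) :
    invSubst (RatFunc.C c / (RatFunc.X - RatFunc.C a) ^ k) =
      RatFunc.C c * RatFunc.X ^ k / (1 - RatFunc.C a * RatFunc.X) ^ k := by
  have hinv : (RatFunc.X : RatFunc ℂ)⁻¹ - RatFunc.C a =
      (1 - RatFunc.C a * RatFunc.X) / RatFunc.X := by
    field_simp [RatFunc.X_ne_zero]
  rw [invSubst_eq_invXAlgHom, map_div₀, map_pow, map_sub, RatFunc.invXAlgHom_X,
    RatFunc.invXAlgHom_C, RatFunc.invXAlgHom_C, hinv, div_pow, div_div_eq_mul_div]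

theorem resInf_C_div_X_sub_C_pow (c a : ℂ) {k : ℕ} (hk : 0 < k) :
    resInf (RatFunc.C c / (RatFunc.X - RatFunc.C a) ^ k) = if k = 1 then -c else 0 := by
  have hX : (RatFunc.X : RatFunc ℂ) ≠ 0 := RatFunc.X_ne_zero
  have hu_alg : algebraMap ℂ[X] (RatFunc ℂ) (1 - Polynomial.C a * Polynomial.X) =
      1 - RatFunc.C a * RatFunc.X := by
    simp only [map_sub, map_one, map_mul, RatFunc.algebraMap_C, RatFunc.algebraMap_X]
  obtain ⟨u, hu_def⟩ : ∃ u : RatFunc ℂ, u = 1 - RatFunc.C a * RatFunc.X := ⟨_, rfl⟩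
  have hu : u ≠ 0 := by
    rw [hu_def, ← hu_alg]
    exact RatFunc.algebraMap_ne_zero fun h => by simpa using congrArg (Polynomial.coeff · 0) h
  rw [resInf, invSubst_C_div_X_sub_C_pow, ← hu_def, zpow_neg, zpow_ofNat]
  obtain rfl | hk2 := (Nat.one_le_iff_ne_zero.mpr hk.ne').eq_or_lt
  · have hsplit : ((RatFunc.X : RatFunc ℂ) ^ 2)⁻¹ * (RatFunc.C c * RatFunc.X ^ 1 / u ^ 1) =
        RatFunc.C c * RatFunc.X ^ (-1 : ℤ) +
          algebraMap ℂ[X] (RatFunc ℂ) (Polynomial.C (c * a)) /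
            algebraMap ℂ[X] (RatFunc ℂ) (1 - Polynomial.C a * Polynomial.X) := by
      rw [hu_alg, ← hu_def, zpow_neg_one, RatFunc.algebraMap_C, map_mul]
      field_simp
      rw [hu_def]
      ring
    rw [hsplit, resAt_add, resAt_zero_C_mul_X_zpow,
      resAt_eq_zero_of_regularAt ⟨_, _, by simp, rfl⟩]
    simp
  · obtain ⟨m, rfl⟩ : ∃ m, k = m + 2 := ⟨k - 2, by omega⟩
    have hregular :
        ((RatFunc.X : RatFunc ℂ) ^ 2)⁻¹ * (RatFunc.C c * RatFunc.X ^ (m + 2) / u ^ (m + 2)) =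
          algebraMap ℂ[X] (RatFunc ℂ) (Polynomial.C c * Polynomial.X ^ m) /
            algebraMap ℂ[X] (RatFunc ℂ) ((1 - Polynomial.C a * Polynomial.X) ^ (m + 2)) := by
      rw [map_pow, hu_alg, ← hu_def, map_mul, map_pow, RatFunc.algebraMap_C,
        RatFunc.algebraMap_X]
      field_simp
      ring
    rw [if_neg (by omega), hregular, resAt_eq_zero_of_regularAt ⟨_, _, by simp, rfl⟩, neg_zero]

def residueSumZero : AddSubmonoid (RatFunc ℂ) where
  carrier := {h | (Function.support fun a : ℂ => resAt a h).Finite ∧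
    (∑ᶠ a : ℂ, resAt a h) + resInf h = 0}
  zero_mem' := by simp [resAt, resInf, invSubst_eq_invXAlgHom]
  add_mem' := by
    rintro f g ⟨hf_fin, hf_sum⟩ ⟨hg_fin, hg_sum⟩
    simp only [Set.mem_ofPred_eq, resAt_add, resInf_add]
    refine ⟨(hf_fin.union hg_fin).subset (Function.support_add _ _), ?_⟩
    rw [finsum_add_distrib hf_fin hg_fin]
    linear_combination hf_sum + hg_sum

theorem mem_residueSumZero_of_resAt_eq_zero_of_ne {h : RatFunc ℂ} (a : ℂ)
    (hne : ∀ b ≠ a, resAt b h = 0) (hsum : resAt a h + resInf h = 0) : h ∈ residueSumZero :=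
  ⟨(Set.finite_singleton a).subset fun b hb => by_contra fun hba => hb (hne b hba),
    by rw [finsum_eq_single _ a hne]; exact hsum⟩

/-- Residue theorem on `ℙ¹`: for every rational function `h ∈ ℂ(t)`, the family of residues
`(Res_a(h))_{a∈ℂ}` has finite support and the total residue vanishes:
`(∑_{a∈ℂ} Res_a(h)) + Res_∞(h) = 0`. -/
theorem residue_theorem_P1 (h : RatFunc ℂ) :
    (Function.support fun a : ℂ => resAt a h).Finite ∧
      (∑ᶠ a : ℂ, resAt a h) + resInf h = 0 := by
  have hgen : Set.range (algebraMap ℂ[X] (RatFunc ℂ)) ∪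
      {f | ∃ (c a : ℂ) (k : ℕ), 0 < k ∧ f = RatFunc.C c / (RatFunc.X - RatFunc.C a) ^ k}
        ⊆ residueSumZero := by
    rintro _ (⟨p, rfl⟩ | ⟨c, a, k, hk, rfl⟩)
    · refine mem_residueSumZero_of_resAt_eq_zero_of_ne 0 (fun b _ => resAt_algebraMap b p) ?_
      rw [resAt_algebraMap, resInf_algebraMap, add_zero]
    · refine mem_residueSumZero_of_resAt_eq_zero_of_ne a
        (fun b hb => resAt_C_div_X_sub_C_pow_of_ne hb c k) ?_
      rw [resAt_C_div_X_sub_C_pow_self, resInf_C_div_X_sub_C_pow c a hk]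
      split_ifs <;> simp
  have hle := AddSubmonoid.closure_le.mpr hgen
  rw [RatFunc.closure_range_algebraMap_union_C_div_X_sub_C_pow_eq_top, top_le_iff] at hle
  exact (AddSubmonoid.eq_top_iff' _).mp hle h
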